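/- arXiv:2403.04456 — 2 statements merged into one kernel-verified Lean document; each statement's English description precedes it below -/
import Mathlib

section
/- If a tree-shift X is topologically stable and has no isolated points, then X is of finite type. -/
open Set

/-- A labeled tree on alphabet `S` over alphabet `A`. -/
abbrev LTree (S A : Type*) := List S → A

/-- The metric on labeled trees: `2^{-n-1}` where `n` is the minimal length of a
word on which the trees differ, and `0` if they are equal. -/
noncomputable def treeDist {S A : Type*} (s t : LTree S A) : ℝ :=
  haveI := Classical.propDecidable (s = t)
  if s = t then 0
  else (2 : ℝ) ^ (-((sInf {n : ℕ | ∃ w : List S, w.length = n ∧ s w ≠ t w} : ℕ) : ℤ) - 1)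

/-- The shift map `σ^i`. -/
def shift {S A : Type*} (i : S) (t : LTree S A) : LTree S A := fun w => t (i :: w)

/-- A pattern: a labeling of a finite prefix-closed set of words. -/
structure TreePattern (S A : Type*) where
  dom : Set (List S)
  finite : dom.Finite
  prefixClosed : ∀ w ∈ dom, ∀ u : List S, u <+: w → u ∈ dom
  label : List S → A

/-- A tree `t` omits a pattern `p` if `p` is not a sub-pattern of `t`. -/
def Omits {S A : Type*} (t : LTree S A) (p : TreePattern S A) : Prop :=
  ¬ ∃ w : List S, ∀ u ∈ p.dom, t (w ++ u) = p.label u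

/-- `T_F`: the set of trees omitting all patterns in `F`. -/
def treesOmitting {S A : Type*} (F : Set (TreePattern S A)) : Set (LTree S A) :=
  {t | ∀ p ∈ F, Omits t p}

/-- A tree-shift: a closed, shift-invariant set of labeled trees. -/
def IsTreeShift {S A : Type*} [TopologicalSpace A] (X : Set (LTree S A)) : Prop :=
  IsClosed X ∧ ∀ i : S, shift i '' X ⊆ X

/-- A tree-shift of finite type: one defined by a finite set of forbidden patterns. -/
def IsFiniteType {S A : Type*} (X : Set (LTree S A)) : Prop :=
  ∃ F : Set (TreePattern S A), F.Finite ∧ X = treesOmitting F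

/-- `blockIn X n b`: the block of height `n` with labels `b` appears in some tree of `X`. -/
def blockIn {S A : Type*} (X : Set (LTree S A)) (n : ℕ) (b : List S → A) : Prop :=
  ∃ t ∈ X, ∃ w : List S, ∀ u : List S, u.length < n → t (w ++ u) = b u

/-- An `[n]`-pseudo-orbit in `X`, indexed by all words. -/
def IsPseudoOrbit {S A : Type*} (X : Set (LTree S A)) (n : ℕ)
    (T : List S → LTree S A) : Prop :=
  (∀ w : List S, T w ∈ X) ∧
    ∀ (w : List S) (i : S) (u : List S), u.length < n → T w (i :: u) = T (w ++ [i]) u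

/-- `t` `[m]`-traces the family `T`. -/
def Traces {S A : Type*} (m : ℕ) (T : List S → LTree S A) (t : LTree S A) : Prop :=
  ∀ w u : List S, u.length < m → t (w ++ u) = T w u

/-- The pseudo-orbit-tracing property. -/
def POTP {S A : Type*} (X : Set (LTree S A)) : Prop :=
  ∀ m : ℕ, 0 < m → ∃ n : ℕ, 0 < n ∧
    ∀ T : List S → LTree S A, IsPseudoOrbit X n T → ∃ t ∈ X, Traces m T t

/-- A finite `[n]`-pseudo-orbit of order `N`, indexed by words of length `< N`. -/
def IsFinitePseudoOrbit {S A : Type*} (X : Set (LTree S A)) (n N : ℕ)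
    (T : List S → LTree S A) : Prop :=
  (∀ w : List S, w.length < N → T w ∈ X) ∧
    ∀ (w : List S), w.length + 1 < N → ∀ (i : S) (u : List S), u.length < n →
      T w (i :: u) = T (w ++ [i]) u

/-- `t` `[m]`-traces a finite family of order `N`. -/
def FinTraces {S A : Type*} (m N : ℕ) (T : List S → LTree S A) (t : LTree S A) : Prop :=
  ∀ w : List S, w.length < N → ∀ u : List S, u.length < m → t (w ++ u) = T w u

/-- The finite pseudo-orbit-tracing property. -/
def FinPOTP {S A : Type*} (X : Set (LTree S A)) : Prop :=
  ∀ m : ℕ, 0 < m → ∃ n : ℕ, 0 < n ∧ ∀ N : ℕ, 0 < N →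
    ∀ T : List S → LTree S A, IsFinitePseudoOrbit X n N T → ∃ t ∈ X, FinTraces m N T t

/-- Topological stability of a tree-shift, with respect to the metric `treeDist`. -/
def TopStable {S A : Type*} [TopologicalSpace A] (X : Set (LTree S A)) : Prop :=
  ∀ ε : ℝ, 0 < ε → ∃ δ : ℝ, 0 < δ ∧
    ∀ τ : S → X → X, (∀ i : S, Continuous (τ i)) →
      (∀ (i : S) (t : X), treeDist (τ i t).1 (shift i t.1) < δ) →
      ∃ φ : X → X, Continuous φ ∧ (∀ t : X, treeDist (φ t).1 t.1 < ε) ∧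
        ∀ (i : S) (t : X), shift i (φ t).1 = (φ (τ i t)).1

namespace Aux

variable {S A : Type*}

lemma treeDist_self (s : LTree S A) : treeDist s s = 0 := by
  simp [treeDist]

lemma treeDist_le_of_agree {s t : LTree S A} {k : ℕ}
    (h : ∀ u : List S, u.length < k → s u = t u) :
    treeDist s t ≤ (2:ℝ) ^ (-(k:ℤ) - 1) := by
  classical
  unfold treeDist
  split_ifs with he
  · positivity
  · set D := {n : ℕ | ∃ w : List S, w.length = n ∧ s w ≠ t w} with hD
    have hne : D.Nonempty := by
      by_contra hcon
      apply he
      funext u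
      by_contra hu
      exact hcon ⟨u.length, u, rfl, hu⟩
    have hmem := Nat.sInf_mem hne
    obtain ⟨w, hw, hne'⟩ := hmem
    have hk : k ≤ sInf D := by
      by_contra hlt
      push_neg at hlt
      have := h w (by omega)
      exact hne' this
    apply zpow_le_zpow_right₀ (by norm_num : (1:ℝ) ≤ 2)
    omega
    
lemma agree_of_treeDist_lt {s t : LTree S A} {k : ℕ}
    (h : treeDist s t < (2:ℝ) ^ (-(k:ℤ) - 1)) :
    ∀ u : List S, u.length ≤ k → s u = t u := by
  classical
  intro u hu
  unfold treeDist at h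
  split_ifs at h with he
  · rw [he]
  · set D := {n : ℕ | ∃ w : List S, w.length = n ∧ s w ≠ t w} with hD
    have hlt := (zpow_lt_zpow_iff_right₀ (by norm_num : (1:ℝ) < 2)).mp h
    have hk : k < sInf D := by omega
    by_contra hne
    have : sInf D ≤ u.length := Nat.sInf_le ⟨u, rfl, hne⟩
    omega


variable {S A : Type*}

/-- Shift along a word. -/
def shiftWord (w : List S) (t : LTree S A) : LTree S A := fun u => t (w ++ u)

lemma shiftWord_mem [TopologicalSpace A] {X : Set (LTree S A)}
    (hX : ∀ i : S, shift i '' X ⊆ X) :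
    ∀ (w : List S) {t : LTree S A}, t ∈ X → shiftWord w t ∈ X := by
  intro w
  induction w with
  | nil => intro t ht; exact ht
  | cons i w ih =>
      intro t ht
      have h1 : shift i t ∈ X := hX i ⟨t, ht, rfl⟩
      exact ih h1

lemma shiftWord_append (w : List S) (i : S) (t : LTree S A) :
    shiftWord (w ++ [i]) t = shift i (shiftWord w t) := by
  funext u
  simp [shiftWord, shift]

/-- Cylinder of level `L` around `x`. -/
def cyl (L : ℕ) (x : LTree S A) : Set (LTree S A) :=
  {y | ∀ u : List S, u.length < L → y u = x u}

lemma isOpen_cyl [Finite S] [TopologicalSpace A] [DiscreteTopology A]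
    (L : ℕ) (x : LTree S A) : IsOpen (cyl L x) := by
  have : cyl L x = ⋂ u ∈ {u : List S | u.length < L}, {y : LTree S A | y u = x u} := by
    ext y; simp [cyl]
  rw [this]
  refine (List.finite_length_lt S L).isOpen_biInter fun u _ => ?_
  show IsOpen ((fun y : LTree S A => y u) ⁻¹' {x u})
  exact (isOpen_discrete _).preimage (continuous_apply u)

lemma isClosed_cyl [TopologicalSpace A] [DiscreteTopology A]
    (L : ℕ) (x : LTree S A) : IsClosed (cyl L x) := by
  have : cyl L x = ⋂ u ∈ {u : List S | u.length < L}, {y : LTree S A | y u = x u} := by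
    ext y; simp [cyl]
  rw [this]
  refine isClosed_biInter fun u _ => ?_
  show IsClosed ((fun y : LTree S A => y u) ⁻¹' {x u})
  exact (isClosed_discrete _).preimage (continuous_apply u)

lemma mem_cyl_self (L : ℕ) (x : LTree S A) : x ∈ cyl L x := fun _ _ => rfl

/-- In a T1 space, near any point of a preperfect set we can find a point of the set
avoiding a given finite set. -/
lemma exists_avoid [TopologicalSpace A] [DiscreteTopology A] [Finite S]
    {X : Set (LTree S A)} (hperf : Preperfect X) {x : LTree S A} (hx : x ∈ X)
    {U : Set (LTree S A)} (hU : IsOpen U) (hxU : x ∈ U) {E : Set (LTree S A)}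
    (hE : E.Finite) : ∃ y ∈ X ∩ U, y ∉ E := by
  have hacc := hperf x hx
  rw [accPt_iff_nhds] at hacc
  have hU' : U \ (E \ {x}) ∈ nhds x := by
    apply Filter.inter_mem (hU.mem_nhds hxU)
    have : IsClosed (E \ {x}) := (hE.subset diff_subset).isClosed
    exact this.isOpen_compl.mem_nhds (by simp)
  obtain ⟨y, ⟨hyU, hyX⟩, hyx⟩ := hacc _ hU'
  refine ⟨y, ⟨hyX, hyU.1⟩, fun hyE => hyU.2 ⟨hyE, hyx⟩⟩

/-- Choose distinct points of `X` close to a given family. -/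
lemma exists_distinct_points [TopologicalSpace A] [DiscreteTopology A] [Finite S]
    {X : Set (LTree S A)} (hperf : Preperfect X) (T : List S → LTree S A) (k : ℕ)
    (l : List (List S)) (hT : ∀ w ∈ l, T w ∈ X) :
    ∃ f : List S → LTree S A,
      (∀ w ∈ l, f w ∈ X ∧ ∀ u : List S, u.length < k → f w u = T w u) ∧
      ∀ w ∈ l, ∀ w' ∈ l, w ≠ w' → f w ≠ f w' := by
  induction l with
  | nil => exact ⟨T, by simp, by simp⟩
  | cons a l ih =>
      obtain ⟨f, hf1, hf2⟩ := ih (fun w hw => hT w (List.mem_cons_of_mem a hw))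
      have haX : T a ∈ X := hT a List.mem_cons_self
      have hEfin : (f '' {w | w ∈ l}).Finite := ((l.finite_toSet).image f)
      obtain ⟨y, ⟨hyX, hycyl⟩, hyE⟩ :=
        exists_avoid hperf haX (isOpen_cyl k (T a)) (mem_cyl_self k (T a)) hEfin
      classical
      refine ⟨fun w => if w = a then y else f w, ?_, ?_⟩
      · intro w hw
        by_cases hwa : w = a
        · subst hwa; simp only [if_pos rfl]; exact ⟨hyX, fun u hu => hycyl u hu⟩
        · simp only [if_neg hwa]
          exact hf1 w ((List.mem_cons.mp hw).resolve_left hwa)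
      · intro w hw w' hw' hne
        by_cases hwa : w = a <;> by_cases hwa' : w' = a
        · exact absurd (hwa.trans hwa'.symm) hne
        · subst hwa; simp only [if_pos rfl, if_neg hwa']
          have hw'l : w' ∈ l := (List.mem_cons.mp hw').resolve_left hwa'
          exact fun h => hyE ⟨w', hw'l, h.symm⟩
        · subst hwa'; simp only [if_pos rfl, if_neg hwa]
          have hwl : w ∈ l := (List.mem_cons.mp hw).resolve_left hwa
          exact fun h => hyE ⟨w, hwl, h⟩
        · simp only [if_neg hwa, if_neg hwa']
          have hwl : w ∈ l := (List.mem_cons.mp hw).resolve_left hwa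
          have hw'l : w' ∈ l := (List.mem_cons.mp hw').resolve_left hwa'
          exact hf2 w hwl w' hw'l hne


end Aux
open Aux in
theorem stable_finPOTP {S A : Type*} [Fintype S] [Nonempty S] [Fintype A] [Nonempty A]
    [TopologicalSpace A] [DiscreteTopology A] (X : Set (LTree S A)) (hX : IsTreeShift X)
    (hstab : TopStable X) (hperf : Preperfect X) : FinPOTP X := by
  classical
  intro m hm
  obtain ⟨δ, hδ, hδprop⟩ := hstab ((2:ℝ) ^ (-(m:ℤ) - 1)) (by positivity)
  obtain ⟨n₀, hn₀⟩ := exists_pow_lt_of_lt_one hδ (by norm_num : (1:ℝ)/2 < 1)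
  set n := max m n₀ with hndef
  have hn2 : (2:ℝ) ^ (-(n:ℤ) - 1) < δ := by
    have h1 : ((1:ℝ)/2) ^ n₀ = (2:ℝ) ^ (-(n₀:ℤ)) := by
      rw [one_div, inv_pow, ← zpow_natCast, ← zpow_neg]
    have h2 : (2:ℝ) ^ (-(n:ℤ) - 1) ≤ (2:ℝ) ^ (-(n₀:ℤ)) := by
      apply zpow_le_zpow_right₀ (by norm_num : (1:ℝ) ≤ 2)
      have : n₀ ≤ n := le_max_right m n₀
      omega
    calc (2:ℝ) ^ (-(n:ℤ) - 1) ≤ (2:ℝ) ^ (-(n₀:ℤ)) := h2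
      _ = ((1:ℝ)/2) ^ n₀ := h1.symm
      _ < δ := hn₀
  have hmn : m ≤ n := le_max_left m n₀
  refine ⟨n, lt_of_lt_of_le hm hmn, ?_⟩
  intro N hN T hTpo
  -- enumerate the words of length < N
  have hWfin : {w : List S | w.length < N}.Finite := List.finite_length_lt S N
  set l := hWfin.toFinset.toList with hldef
  have hl : ∀ w : List S, w ∈ l ↔ w.length < N := by
    intro w
    rw [hldef, Finset.mem_toList, Set.Finite.mem_toFinset]
    rfl
  obtain ⟨x, hx1, hx2⟩ := exists_distinct_points hperf T (n+1) l
    (fun w hw => hTpo.1 w ((hl w).mp hw))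
  have hxX : ∀ w : List S, w.length < N → x w ∈ X := fun w hw => (hx1 w ((hl w).mpr hw)).1
  have hxT : ∀ w : List S, w.length < N → ∀ u : List S, u.length < n + 1 → x w u = T w u :=
    fun w hw => (hx1 w ((hl w).mpr hw)).2
  have hxinj : ∀ w w' : List S, w.length < N → w'.length < N → w ≠ w' → x w ≠ x w' :=
    fun w w' hw hw' => hx2 w ((hl w).mpr hw) w' ((hl w').mpr hw')
  -- choose the cylinder level L
  set g : List S × List S → ℕ := fun p =>
    if h : x p.1 ≠ x p.2 then (Classical.choose (Function.ne_iff.mp h)).length else 0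
    with hgdef
  set L : ℕ := (hWfin.toFinset ×ˢ hWfin.toFinset).sup g + n + 2 with hLdef
  have hLn : n + 1 < L := by omega
  have hLkey : ∀ w w' : List S, w.length < N → w'.length < N → x w ≠ x w' →
      ∃ u : List S, u.length < L ∧ x w u ≠ x w' u := by
    intro w w' hw hw' hne
    refine ⟨Classical.choose (Function.ne_iff.mp hne),
      ?_, Classical.choose_spec (Function.ne_iff.mp hne)⟩
    have hmem : (w, w') ∈ hWfin.toFinset ×ˢ hWfin.toFinset := by
      rw [Finset.mem_product]
      constructor <;> rw [Set.Finite.mem_toFinset] <;> assumption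
    have hle := Finset.le_sup (f := g) hmem
    have hg : g (w, w') = (Classical.choose (Function.ne_iff.mp hne)).length := by
      rw [hgdef]
      simp only
      rw [dif_pos hne]
    omega
  -- uniqueness of the cylinder containing a point
  have huniq : ∀ (z : LTree S A) (w w' : List S), w.length < N → w'.length < N →
      z ∈ cyl L (x w) → z ∈ cyl L (x w') → w = w' := by
    intro z w w' hw hw' hzw hzw'
    by_contra hne
    obtain ⟨u, hu, hune⟩ := hLkey w w' hw hw' (hxinj w w' hw hw' hne)
    exact hune ((hzw u hu).symm.trans (hzw' u hu))
  have hshift_mem : ∀ (i : S) (y : LTree S A), y ∈ X → shift i y ∈ X :=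
    fun i y hy => hX.2 i ⟨y, hy, rfl⟩
  -- define the perturbed maps
  set tval : S → X → LTree S A := fun i z =>
    if h : ∃ w : List S, w.length + 1 < N ∧ z.1 ∈ cyl L (x w) then
      x (Classical.choose h ++ [i]) else shift i z.1
    with htvaldef
  have htvalpos : ∀ (i : S) (z : X) (w : List S), w.length + 1 < N → z.1 ∈ cyl L (x w) →
      tval i z = x (w ++ [i]) := by
    intro i z w hw hzw
    have h : ∃ w : List S, w.length + 1 < N ∧ z.1 ∈ cyl L (x w) := ⟨w, hw, hzw⟩
    rw [htvaldef]
    simp only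
    rw [dif_pos h]
    have heq : Classical.choose h = w :=
      huniq z.1 (Classical.choose h) w (by have := (Classical.choose_spec h).1; omega)
        (by omega) (Classical.choose_spec h).2 hzw
    rw [heq]
  have htvalneg : ∀ (i : S) (z : X),
      (¬ ∃ w : List S, w.length + 1 < N ∧ z.1 ∈ cyl L (x w)) → tval i z = shift i z.1 := by
    intro i z h
    rw [htvaldef]
    simp only
    rw [dif_neg h]
  have htvalX : ∀ (i : S) (z : X), tval i z ∈ X := by
    intro i z
    by_cases h : ∃ w : List S, w.length + 1 < N ∧ z.1 ∈ cyl L (x w)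
    · obtain ⟨w, hw, hzw⟩ := h
      rw [htvalpos i z w hw hzw]
      exact hxX (w ++ [i]) (by simp; omega)
    · rw [htvalneg i z h]
      exact hshift_mem i z.1 z.2
  set τ : S → X → X := fun i z => ⟨tval i z, htvalX i z⟩ with hτdef
  -- continuity
  have hτcont : ∀ i : S, Continuous (τ i) := by
    intro i
    apply Continuous.subtype_mk
    rw [continuous_iff_continuousAt]
    intro z
    by_cases h : ∃ w : List S, w.length + 1 < N ∧ z.1 ∈ cyl L (x w)
    · obtain ⟨w, hw, hzw⟩ := h
      have hopen : IsOpen ((Subtype.val ⁻¹' cyl L (x w)) : Set X) :=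
        (isOpen_cyl L (x w)).preimage continuous_subtype_val
      have hev : (fun z' : X => tval i z') =ᶠ[nhds z] fun _ => x (w ++ [i]) := by
        apply Filter.eventuallyEq_of_mem (hopen.mem_nhds hzw)
        intro z' hz'
        exact htvalpos i z' w hw hz'
      exact (continuousAt_const (y := x (w ++ [i]))).congr hev.symm
    · have hclosed : IsClosed (⋃ w ∈ {w : List S | w.length + 1 < N}, cyl L (x w)) := by
        apply Set.Finite.isClosed_biUnion
        · exact (List.finite_length_lt S N).subset (fun w hw => by simp at hw ⊢; omega)
        · exact fun w _ => isClosed_cyl L (x w)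
      have hopen : IsOpen ((Subtype.val ⁻¹' (⋃ w ∈ {w : List S | w.length + 1 < N}, cyl L (x w))ᶜ) : Set X) :=
        (hclosed.isOpen_compl).preimage continuous_subtype_val
      have hzmem : z ∈ (Subtype.val ⁻¹' (⋃ w ∈ {w : List S | w.length + 1 < N}, cyl L (x w))ᶜ : Set X) := by
        simp only [Set.mem_preimage, Set.mem_compl_iff, Set.mem_iUnion]
        rintro ⟨w, hw, hzw⟩
        exact h ⟨w, hw, hzw⟩
      have hev : (fun z' : X => tval i z') =ᶠ[nhds z] fun z' => shift i z'.1 := by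
        apply Filter.eventuallyEq_of_mem (hopen.mem_nhds hzmem)
        intro z' hz'
        apply htvalneg
        rintro ⟨w, hw, hzw⟩
        simp only [Set.mem_preimage, Set.mem_compl_iff, Set.mem_iUnion] at hz'
        exact hz' ⟨w, hw, hzw⟩
      have hcont : Continuous fun z' : X => shift i z'.1 :=
        continuous_pi fun u => (continuous_apply (i :: u)).comp continuous_subtype_val
      exact (hcont.continuousAt).congr hev.symm
  -- δ-closeness
  have hτclose : ∀ (i : S) (z : X), treeDist (τ i z).1 (shift i z.1) < δ := by
    intro i z
    by_cases h : ∃ w : List S, w.length + 1 < N ∧ z.1 ∈ cyl L (x w)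
    · obtain ⟨w, hw, hzw⟩ := h
      have heq : (τ i z).1 = x (w ++ [i]) := htvalpos i z w hw hzw
      rw [heq]
      have hagree : ∀ u : List S, u.length < n → x (w ++ [i]) u = shift i z.1 u := by
        intro u hu
        have h1 : x (w ++ [i]) u = T (w ++ [i]) u :=
          hxT (w ++ [i]) (by simp; omega) u (by omega)
        have h2 : T w (i :: u) = T (w ++ [i]) u := hTpo.2 w hw i u hu
        have h3 : T w (i :: u) = x w (i :: u) :=
          (hxT w (by omega) (i :: u) (by simp; omega)).symm
        have h4 : x w (i :: u) = z.1 (i :: u) := (hzw (i :: u) (by simp; omega)).symm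
        rw [h1, ← h2, h3, h4]
        rfl
      calc treeDist (x (w ++ [i])) (shift i z.1) ≤ (2:ℝ) ^ (-(n:ℤ) - 1) :=
            treeDist_le_of_agree hagree
        _ < δ := hn2
    · have heq : (τ i z).1 = shift i z.1 := htvalneg i z h
      rw [heq, treeDist_self]
      exact hδ
  obtain ⟨φ, hφcont, hφclose, hφconj⟩ := hδprop τ hτcont hτclose
  -- computing τ on the chosen points
  have hτx : ∀ (i : S) (w : List S) (hw : w.length + 1 < N),
      τ i ⟨x w, hxX w (by omega)⟩ = ⟨x (w ++ [i]), hxX (w ++ [i]) (by simp; omega)⟩ := by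
    intro i w hw
    apply Subtype.ext
    exact htvalpos i ⟨x w, hxX w (by omega)⟩ w hw (mem_cyl_self L (x w))
  -- the tracing point
  have h0 : ([] : List S).length < N := by simpa using hN
  set x0 : X := ⟨x [], hxX [] h0⟩ with hx0def
  refine ⟨(φ x0).1, (φ x0).2, ?_⟩
  have orbit : ∀ w : List S, ∀ hw : w.length < N,
      (fun v => (φ x0).1 (w ++ v)) = (φ ⟨x w, hxX w hw⟩).1 := by
    intro w
    induction w using List.reverseRecOn with
    | nil => intro hw; funext v; simp; rfl
    | append_singleton w i ih =>
        intro hw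
        have hw' : w.length + 1 < N := by simpa using hw
        funext v
        have step1 : (φ x0).1 (w ++ [i] ++ v) = (φ ⟨x w, hxX w (by omega)⟩).1 (i :: v) := by
          rw [List.append_assoc]
          have hc := congrFun (ih (by omega)) ([i] ++ v)
          simpa using hc
        have step2 : (φ ⟨x w, hxX w (by omega)⟩).1 (i :: v) =
            (φ (τ i ⟨x w, hxX w (by omega)⟩)).1 v :=
          congrFun (hφconj i ⟨x w, hxX w (by omega)⟩) v
        rw [step1, step2, hτx i w hw']
  intro w hw u hu
  have h1 : (φ x0).1 (w ++ u) = (φ ⟨x w, hxX w hw⟩).1 u := congrFun (orbit w hw) u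
  have h2 : (φ ⟨x w, hxX w hw⟩).1 u = x w u := by
    apply agree_of_treeDist_lt (k := m) (hφclose ⟨x w, hxX w hw⟩)
    omega
  have h3 : x w u = T w u := hxT w hw u (by omega)
  rw [h1, h2, h3]

open Aux in
theorem finPOTP_isFiniteType {S A : Type*} [Fintype S] [Nonempty S] [Fintype A] [Nonempty A]
    [TopologicalSpace A] [DiscreteTopology A] (X : Set (LTree S A)) (hX : IsTreeShift X)
    (hpotp : FinPOTP X) : IsFiniteType X := by
  classical
  obtain ⟨n, hn, hnprop⟩ := hpotp 1 (by norm_num)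
  set a₀ : A := Classical.arbitrary A with ha₀
  set K : Set (List S) := {u : List S | u.length ≤ n} with hK
  have hKfin : K.Finite := List.finite_length_le S n
  have hKpc : ∀ w ∈ K, ∀ u : List S, u <+: w → u ∈ K :=
    fun w hw u hu => le_trans hu.length_le hw
  set F : Set (TreePattern S A) :=
    {p | p.dom = K ∧ (∀ u : List S, ¬ u.length ≤ n → p.label u = a₀) ∧
      ¬ blockIn X (n+1) p.label} with hF
  have hFfin : F.Finite := by
    have hsub : F ⊆ (fun b : List S → A => TreePattern.mk K hKfin hKpc b) ''
        {b : List S → A | ∀ u : List S, ¬ u.length ≤ n → b u = a₀} := by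
      rintro ⟨dom, fin, pc, lab⟩ ⟨hdom, hlab, hblk⟩
      refine ⟨lab, hlab, ?_⟩
      simp only at hdom
      subst hdom
      rfl
    apply Set.Finite.subset _ hsub
    apply Set.Finite.image
    haveI := hKfin.to_subtype
    have : {b : List S → A | ∀ u : List S, ¬ u.length ≤ n → b u = a₀} ⊆
        Set.range (fun g : (↥K → A) => fun u : List S =>
          if h : u ∈ K then g ⟨u, h⟩ else a₀) := by
      intro b hb
      refine ⟨fun u => b u.1, ?_⟩
      funext u
      by_cases h : u ∈ K
      · simp [h]
      · simp only [dif_neg h]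
        exact (hb u h).symm
    exact (Set.finite_range _).subset this
  refine ⟨F, hFfin, ?_⟩
  apply Set.Subset.antisymm
  · -- X ⊆ treesOmitting F
    intro t ht p hp
    rintro ⟨w, hw⟩
    apply hp.2.2
    refine ⟨t, ht, w, fun u hu => ?_⟩
    exact hw u (by rw [hp.1]; exact Nat.lt_succ_iff.mp hu)
  · -- treesOmitting F ⊆ X
    intro t ht
    -- every (n+1)-block of t appears in X
    have hblock : ∀ w : List S, ∃ s, s ∈ X ∧ ∀ u : List S, u.length < n + 1 →
        s u = t (w ++ u) := by
      intro w
      set b : List S → A := fun u => if u.length ≤ n then t (w ++ u) else a₀ with hb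
      set p : TreePattern S A := TreePattern.mk K hKfin hKpc b with hp
      have hpF : p ∉ F := by
        intro hpF
        apply ht p hpF
        refine ⟨w, fun u hu => ?_⟩
        have : u.length ≤ n := hu
        simp only [hp, hb]
        rw [if_pos this]
      have hblk : blockIn X (n+1) b := by
        by_contra hblk
        exact hpF ⟨rfl, fun u hu => by show (if u.length ≤ n then t (w ++ u) else a₀) = a₀; rw [if_neg hu], hblk⟩
      obtain ⟨s, hs, w', hw'⟩ := hblk
      refine ⟨shiftWord w' s, shiftWord_mem hX.2 w' hs, fun u hu => ?_⟩
      have := hw' u hu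
      simp only [shiftWord]
      rw [this, hb]
      simp only
      rw [if_pos (Nat.lt_succ_iff.mp hu)]
    set T : List S → LTree S A := fun w => Classical.choose (hblock w) with hT
    have hTX : ∀ w : List S, T w ∈ X := fun w => (Classical.choose_spec (hblock w)).1
    have hTt : ∀ w u : List S, u.length < n + 1 → T w u = t (w ++ u) :=
      fun w => (Classical.choose_spec (hblock w)).2
    -- for each N, get a tracing point agreeing with t up to depth N
    have htrace : ∀ N : ℕ, ∃ s ∈ X, ∀ w : List S, w.length < N + 1 → s w = t w := by
      intro N
      have hpo : IsFinitePseudoOrbit X n (N+1) T := by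
        constructor
        · exact fun w _ => hTX w
        · intro w _ i u hu
          rw [hTt w (i :: u) (by simpa using hu), hTt (w ++ [i]) u (by omega)]
          simp
      obtain ⟨s, hsX, hstr⟩ := hnprop (N+1) (by omega) T hpo
      refine ⟨s, hsX, fun w hw => ?_⟩
      have h4 := hstr w hw [] (by norm_num)
      have h5 := hTt w [] (by simp)
      rw [List.append_nil] at h4 h5
      rw [h4, h5]
    -- take the limit
    set seq : ℕ → LTree S A := fun N => Classical.choose (htrace N) with hseq
    have hseqX : ∀ N, seq N ∈ X := fun N => (Classical.choose_spec (htrace N)).1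
    have hseqt : ∀ N, ∀ w : List S, w.length < N + 1 → seq N w = t w :=
      fun N => (Classical.choose_spec (htrace N)).2
    have htend : Filter.Tendsto seq Filter.atTop (nhds t) := by
      rw [tendsto_pi_nhds]
      intro u
      apply Filter.Tendsto.congr' _ (tendsto_const_nhds (x := t u))
      filter_upwards [Filter.eventually_ge_atTop u.length] with N hN
      exact (hseqt N u (by omega)).symm
    exact hX.1.mem_of_tendsto htend (Filter.Eventually.of_forall hseqX)


theorem stmt_15 {S A : Type*} [Fintype S] [Nonempty S] [Fintype A] [Nonempty A] [TopologicalSpace A] [DiscreteTopology A] (X : Set (LTree S A)) (hX : IsTreeShift X)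
    (hstab : TopStable X) (hperf : Preperfect X) :
    IsFiniteType X :=
  finPOTP_isFiniteType X hX (stable_finPOTP X hX hstab hperf)
end

section
/- A tree-shift with no isolated points is topologically stable if and only if it is of finite type. -/
open Set

/-! ### Auxiliary material -/

section Aux

variable {S A : Type*}

lemma treeDist_self (s : LTree S A) : treeDist s s = 0 := by
  unfold treeDist; simp

lemma treeDist_le_of_agree {s t : LTree S A} {k : ℕ}
    (h : ∀ v : List S, v.length ≤ k → s v = t v) :
    treeDist s t ≤ (2:ℝ) ^ (-(k:ℤ) - 2) := by
  classical
  by_cases he : s = t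
  · unfold treeDist
    rw [if_pos he]
    positivity
  · unfold treeDist
    rw [if_neg he]
    set St := {m : ℕ | ∃ w : List S, w.length = m ∧ s w ≠ t w} with hSt
    have hne : St.Nonempty := by
      obtain ⟨w, hw⟩ := Function.ne_iff.1 he
      exact ⟨w.length, w, rfl, hw⟩
    obtain ⟨w, hwl, hwne⟩ := Nat.sInf_mem hne
    have hk : k + 1 ≤ sInf St := by
      by_contra h'
      push_neg at h'
      exact hwne (h w (by omega))
    have : -((sInf St : ℕ) : ℤ) - 1 ≤ -(k:ℤ) - 2 := by
      have : (k:ℤ) + 1 ≤ ((sInf St : ℕ) : ℤ) := by exact_mod_cast hk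
      linarith
    exact zpow_le_zpow_right₀ one_le_two this

lemma agree_of_treeDist_lt {s t : LTree S A} {k : ℕ}
    (h : treeDist s t < (2:ℝ) ^ (-(k:ℤ) - 1)) :
    ∀ v : List S, v.length ≤ k → s v = t v := by
  intro v hv
  by_contra hne
  have hst : s ≠ t := fun he => hne (congrFun he v)
  unfold treeDist at h
  rw [if_neg hst] at h
  set St := {m : ℕ | ∃ w : List S, w.length = m ∧ s w ≠ t w} with hSt
  have hle : sInf St ≤ v.length := Nat.sInf_le ⟨v, rfl, hne⟩
  have hexp : -(k:ℤ) - 1 ≤ -((sInf St : ℕ) : ℤ) - 1 := by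
    have : ((sInf St : ℕ) : ℤ) ≤ (k : ℤ) := by exact_mod_cast hle.trans hv
    linarith
  exact absurd h (not_lt.2 (zpow_le_zpow_right₀ one_le_two hexp))

lemma exists_pow_dist (δ : ℝ) (hδ : 0 < δ) : ∃ k : ℕ, (2:ℝ) ^ (-(k:ℤ) - 1) < δ := by
  obtain ⟨k, hk⟩ := exists_pow_lt_of_lt_one hδ (by norm_num : (1/2:ℝ) < 1)
  refine ⟨k, lt_of_le_of_lt ?_ hk⟩
  have h1 : ((1:ℝ)/2) ^ k = (2:ℝ) ^ (-(k:ℤ)) := by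
    rw [one_div, inv_pow, ← zpow_natCast, ← zpow_neg]
  rw [h1]
  exact zpow_le_zpow_right₀ one_le_two (by linarith)

/-- Iterating a family of self-maps along a word. -/
def recIter {X : Set (LTree S A)} (τ : S → X → X) : List S → X → X
  | [], x => x
  | i :: w, x => recIter τ w (τ i x)

lemma recIter_snoc {X : Set (LTree S A)} (τ : S → X → X) :
    ∀ (w : List S) (i : S) (x : X), recIter τ (w ++ [i]) x = τ i (recIter τ w x) := by
  intro w
  induction w with
  | nil => intro i x; rfl
  | cons j w ih => intro i x; exact ih i (τ j x)

lemma recIter_continuous [TopologicalSpace A] {X : Set (LTree S A)} (τ : S → X → X)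
    (hτ : ∀ i, Continuous (τ i)) : ∀ w : List S, Continuous (recIter τ w) := by
  intro w
  induction w with
  | nil => exact continuous_id
  | cons i w ih => exact ih.comp (hτ i)

lemma cyl_isOpen [Finite S] [TopologicalSpace A] [DiscreteTopology A] (c : LTree S A) (k : ℕ) :
    IsOpen {z : LTree S A | ∀ u : List S, u.length ≤ k → z u = c u} := by
  have heq : {z : LTree S A | ∀ u : List S, u.length ≤ k → z u = c u} =
      ⋂ u ∈ {u : List S | u.length ≤ k}, {z : LTree S A | z u = c u} := by
    ext z; simp
  rw [heq]
  refine (List.finite_length_le S k).isOpen_biInter fun u _ => ?_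
  have := (continuous_apply (A := fun _ : List S => A) u).isOpen_preimage {c u} (isOpen_discrete _)
  simpa [Set.preimage] using this

lemma cyl_isClosed [TopologicalSpace A] [DiscreteTopology A] (c : LTree S A) (k : ℕ) :
    IsClosed {z : LTree S A | ∀ u : List S, u.length ≤ k → z u = c u} := by
  have heq : {z : LTree S A | ∀ u : List S, u.length ≤ k → z u = c u} =
      ⋂ u ∈ {u : List S | u.length ≤ k}, {z : LTree S A | z u = c u} := by
    ext z; simp
  rw [heq]
  refine isClosed_biInter fun u _ => ?_
  have := (isClosed_discrete {c u}).preimage (continuous_apply (A := fun _ : List S => A) u)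
  simpa [Set.preimage] using this

lemma shiftW_mem [TopologicalSpace A] {X : Set (LTree S A)} (hX : IsTreeShift X)
    {t : LTree S A} (ht : t ∈ X) : ∀ w : List S, (fun u => t (w ++ u)) ∈ X := by
  intro w
  induction w using List.reverseRecOn with
  | nil => simpa using ht
  | append_singleton w i ih =>
    have heq : (fun u => t ((w ++ [i]) ++ u)) = shift i (fun u => t (w ++ u)) := by
      funext u; simp [shift]
    rw [heq]
    exact hX.2 i ⟨_, ih, rfl⟩

end Aux


/-- Finite type implies topological stability. -/
lemma stepC {S A : Type*} [Fintype S] [Fintype A] [TopologicalSpace A] [DiscreteTopology A]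
    (X : Set (LTree S A)) (hFT : IsFiniteType X) : TopStable X := by
  classical
  obtain ⟨F, hFfin, rfl⟩ := hFT
  intro ε hε
  -- bound on the lengths of words in domains of patterns of F
  obtain ⟨B, hB⟩ : ∃ B : ℕ, ∀ p ∈ F, ∀ u ∈ p.dom, u.length ≤ B := by
    have hL : (⋃ p ∈ F, p.dom).Finite := hFfin.biUnion fun p _ => p.finite
    obtain ⟨B, hB⟩ := (hL.image List.length).bddAbove
    exact ⟨B, fun p hp u hu => hB (Set.mem_image_of_mem _ (Set.mem_biUnion hp hu))⟩
  obtain ⟨n₁, hn₁⟩ := exists_pow_dist ε hε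
  set n := max B n₁ with hn
  refine ⟨(2:ℝ) ^ (-(n:ℤ) - 1), by positivity, ?_⟩
  intro τ hτc hτδ
  have hclose : ∀ (i : S) (x : treesOmitting F) (z : List S), z.length ≤ n →
      (τ i x).1 z = x.1 (i :: z) :=
    fun i x z hz => agree_of_treeDist_lt (hτδ i x) z hz
  have SS : ∀ (w : List S) (x : treesOmitting F) (i : S) (v : List S), v.length ≤ n →
      (recIter τ (w ++ [i]) x).1 v = (recIter τ w x).1 (i :: v) := by
    intro w
    induction w with
    | nil => intro x i v hv; exact hclose i x v hv
    | cons j w' ih =>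
      intro x i v hv
      show (recIter τ (w' ++ [i]) (τ j x)).1 v = (recIter τ w' (τ j x)).1 (i :: v)
      exact ih (τ j x) i v hv
  have KL : ∀ (u w : List S) (x : treesOmitting F) (v : List S), u.length + v.length ≤ n →
      (recIter τ (w ++ u) x).1 v = (recIter τ w x).1 (u ++ v) := by
    intro u
    induction u using List.reverseRecOn with
    | nil => intro w x v h; simp
    | append_singleton u' i ih =>
      intro w x v h
      simp only [List.length_append, List.length_singleton] at h
      have h1 : w ++ (u' ++ [i]) = (w ++ u') ++ [i] := (List.append_assoc _ _ _).symm
      rw [h1, SS _ _ _ _ (by omega)]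
      rw [ih w x (i :: v) (by simp; omega)]
      simp
  have hmem : ∀ x : treesOmitting F, (fun w => (recIter τ w x).1 []) ∈ treesOmitting F := by
    intro x p hp
    rintro ⟨w, hw⟩
    have hrec := (recIter τ w x).2
    apply hrec p hp
    refine ⟨[], fun u hu => ?_⟩
    have hu' : u.length ≤ n := le_trans (hB p hp u hu) (le_max_left _ _)
    have h2 := hw u hu
    have h3 := KL u w x [] (by simpa using hu')
    simp only [List.append_nil, List.nil_append] at h3 ⊢
    rw [← h3]
    exact h2
  refine ⟨fun x => ⟨fun w => (recIter τ w x).1 [], hmem x⟩, ?_, ?_, ?_⟩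
  · apply Continuous.subtype_mk
    apply continuous_pi
    intro w
    exact (continuous_apply ([] : List S)).comp
      (continuous_subtype_val.comp (recIter_continuous τ hτc w))
  · intro x
    have hag : ∀ v : List S, v.length ≤ n →
        (fun w => (recIter τ w x).1 []) v = x.1 v := by
      intro v hv
      have h3 := KL v [] x [] (by simpa using hv)
      simpa [recIter] using h3
    have h4 : treeDist (fun w => (recIter τ w x).1 []) x.1 ≤ (2:ℝ) ^ (-(n:ℤ) - 2) :=
      treeDist_le_of_agree hag
    have h5 : (2:ℝ) ^ (-(n:ℤ) - 2) ≤ (2:ℝ) ^ (-(n₁:ℤ) - 2) := by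
      refine zpow_le_zpow_right₀ one_le_two ?_
      have : (n₁ : ℤ) ≤ (n : ℤ) := by exact_mod_cast le_max_right B n₁
      linarith
    have h6 : (2:ℝ) ^ (-(n₁:ℤ) - 2) < (2:ℝ) ^ (-(n₁:ℤ) - 1) :=
      zpow_lt_zpow_right₀ one_lt_two (by linarith)
    calc treeDist _ _ ≤ (2:ℝ) ^ (-(n:ℤ) - 2) := h4
      _ ≤ (2:ℝ) ^ (-(n₁:ℤ) - 2) := h5
      _ < (2:ℝ) ^ (-(n₁:ℤ) - 1) := h6
      _ < ε := hn₁
  · intro i x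
    funext w
    rfl


/-- If there is a uniform depth `n` such that every locally `n`-admissible tree belongs
to `X`, then `X` is of finite type. -/
lemma stepB {S A : Type*} [Fintype S] [Fintype A] [Nonempty A] [TopologicalSpace A]
    (X : Set (LTree S A)) (hX : IsTreeShift X) (n : ℕ)
    (hA : ∀ t : LTree S A,
      (∀ w : List S, ∃ x ∈ X, ∀ u : List S, u.length ≤ n → x u = t (w ++ u)) → t ∈ X) :
    IsFiniteType X := by
  classical
  set Bad : Set (List S → A) := {b | (∀ u : List S, ¬ u.length ≤ n → b u = Classical.arbitrary A) ∧
      ¬ ∃ x ∈ X, ∀ u : List S, u.length ≤ n → x u = b u} with hBad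
  have hdomfin : {u : List S | u.length ≤ n}.Finite := List.finite_length_le S n
  set P : (List S → A) → TreePattern S A := fun b =>
    ⟨{u | u.length ≤ n}, hdomfin, fun w hw u hu => le_trans hu.length_le hw, b⟩ with hP
  have hBadfin : Bad.Finite := by
    haveI : Finite ↥{u : List S | u.length ≤ n} := hdomfin.to_subtype
    apply Set.Finite.of_finite_image (f := fun b (u : {u : List S | u.length ≤ n}) => b u.1)
    · exact Set.toFinite _
    · intro b hb b' hb' hEq
      funext u
      by_cases hu : u.length ≤ n
      · exact congrFun hEq ⟨u, hu⟩
      · rw [hb.1 u hu, hb'.1 u hu]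
  refine ⟨P '' Bad, hBadfin.image P, ?_⟩
  ext t
  constructor
  · intro ht p hp
    obtain ⟨b, hb, rfl⟩ := hp
    rintro ⟨w, hw⟩
    exact hb.2 ⟨fun u => t (w ++ u), shiftW_mem hX ht w, fun u hu => hw u hu⟩
  · intro ht
    apply hA
    intro w
    by_contra hcon
    push_neg at hcon
    set b : List S → A := fun u => if u.length ≤ n then t (w ++ u) else Classical.arbitrary A
      with hb
    have hbBad : b ∈ Bad := by
      refine ⟨fun u hu => if_neg hu, ?_⟩
      rintro ⟨x, hxX, hx⟩
      obtain ⟨u, hu, hne⟩ := hcon x hxX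
      exact hne ((hx u hu).trans (if_pos hu))
    refine ht (P b) ⟨b, hbBad, rfl⟩ ⟨w, fun u hu => ?_⟩
    have hu' : u.length ≤ n := hu
    simp [hb, hP, hu']

/-- Topological stability plus preperfectness gives a uniform local admissibility depth. -/
lemma stepA {S A : Type*} [Fintype S] [Fintype A] [Nonempty A] [TopologicalSpace A]
    [DiscreteTopology A] (X : Set (LTree S A)) (hX : IsTreeShift X) (hperf : Preperfect X)
    (hTS : TopStable X) :
    ∃ n : ℕ, ∀ t : LTree S A,
      (∀ w : List S, ∃ x ∈ X, ∀ u : List S, u.length ≤ n → x u = t (w ++ u)) → t ∈ X := by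
  classical
  obtain ⟨δ, hδpos, hstab⟩ := hTS (1/2) (by norm_num)
  obtain ⟨n₀, hn₀⟩ := exists_pow_dist δ hδpos
  refine ⟨n₀ + 1, fun t hLA => ?_⟩
  set n : ℕ := n₀ + 1 with hn
  have key : ∀ N : ℕ, ∃ x ∈ X, ∀ w : List S, w.length ≤ N → x w = t w := by
    intro N
    -- a point of `X` matching `t` below `w` to depth `n`, avoiding a given finite set
    have EXT : ∀ (w : List S) (K : Set (LTree S A)), K.Finite →
        ∃ z, z ∈ X ∧ z ∉ K ∧ ∀ u : List S, u.length ≤ n → z u = t (w ++ u) := by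
      intro w K hK
      obtain ⟨x₀, hx₀X, hx₀⟩ := hLA w
      have hU : IsOpen {z : LTree S A | ∀ u : List S, u.length ≤ n → z u = x₀ u} :=
        cyl_isOpen x₀ n
      have hacc := accPt_iff_nhds.1 (hperf x₀ hx₀X)
      have hKc : IsClosed (K \ {x₀}) := (hK.subset Set.diff_subset).isClosed
      obtain ⟨z, ⟨⟨hzU, hzK⟩, hzX⟩, hzne⟩ :=
        hacc ({z : LTree S A | ∀ u : List S, u.length ≤ n → z u = x₀ u} \ (K \ {x₀}))
          ((hU.sdiff hKc).mem_nhds ⟨fun u _ => rfl, fun h => h.2 rfl⟩)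
      exact ⟨z, hzX, fun hzK' => hzK ⟨hzK', hzne⟩, fun u hu => (hzU u hu).trans (hx₀ u hu)⟩
    -- an injective family of such points over any finite set of words
    have hchoice : ∀ Fs : Finset (List S), ∃ f : List S → LTree S A,
        (∀ w ∈ Fs, f w ∈ X ∧ ∀ u : List S, u.length ≤ n → f w u = t (w ++ u)) ∧
          Set.InjOn f ↑Fs := by
      intro Fs
      induction Fs using Finset.induction_on with
      | empty => exact ⟨fun _ _ => Classical.arbitrary A, by simp, by simp⟩
      | @insert a Fs ha ih =>
        obtain ⟨f, hf, hinj⟩ := ih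
        obtain ⟨z, hzX, hzK, hzag⟩ := EXT a (f '' ↑Fs) (Fs.finite_toSet.image f)
        refine ⟨Function.update f a z, ?_, ?_⟩
        · intro w hw
          rcases Finset.mem_insert.1 hw with rfl | hw'
          · rw [Function.update_self]; exact ⟨hzX, hzag⟩
          · rw [Function.update_of_ne (by rintro rfl; exact ha hw')]; exact hf w hw'
        · intro w hw w' hw' hEq
          simp only [Finset.coe_insert, Set.mem_insert_iff, Finset.mem_coe] at hw hw'
          rcases hw with rfl | hw <;> rcases hw' with rfl | hw'
          · rfl
          · exfalso
            rw [Function.update_self, Function.update_of_ne (by rintro rfl; exact ha hw')] at hEq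
            exact hzK ⟨w', hw', hEq.symm⟩
          · exfalso
            rw [Function.update_self, Function.update_of_ne (by rintro rfl; exact ha hw)] at hEq
            exact hzK ⟨w, hw, hEq⟩
          · rw [Function.update_of_ne (by rintro rfl; exact ha hw),
              Function.update_of_ne (by rintro rfl; exact ha hw')] at hEq
            exact hinj hw hw' hEq
    obtain ⟨f, hf, hinj⟩ := hchoice (List.finite_length_le S (N+1)).toFinset
    have hmemFs : ∀ w : List S, w.length ≤ N + 1 →
        w ∈ (List.finite_length_le S (N+1)).toFinset :=
      fun w hw => (Set.Finite.mem_toFinset _).2 hw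
    have hfX : ∀ w : List S, w.length ≤ N + 1 → f w ∈ X :=
      fun w hw => (hf w (hmemFs w hw)).1
    have hfag : ∀ w : List S, w.length ≤ N + 1 → ∀ u : List S, u.length ≤ n →
        f w u = t (w ++ u) := fun w hw => (hf w (hmemFs w hw)).2
    -- separation constant
    obtain ⟨D, hDn, hsep⟩ : ∃ D : ℕ, n ≤ D ∧ ∀ w : List S, w.length ≤ N+1 →
        ∀ w' : List S, w'.length ≤ N+1 → w ≠ w' →
        ∃ u : List S, u.length ≤ D ∧ f w u ≠ f w' u := by
      set Fs := (List.finite_length_le S (N+1)).toFinset with hFs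
      set g : List S × List S → ℕ := fun p =>
        if h : f p.1 = f p.2 then 0 else (Function.ne_iff.1 h).choose.length with hg
      refine ⟨n + (Fs ×ˢ Fs).sup g, Nat.le_add_right _ _, ?_⟩
      intro w hw w' hw' hne
      have hfne : f w ≠ f w' := fun h =>
        hne (hinj (Finset.mem_coe.2 (hmemFs w hw)) (Finset.mem_coe.2 (hmemFs w' hw')) h)
      refine ⟨(Function.ne_iff.1 hfne).choose, ?_, (Function.ne_iff.1 hfne).choose_spec⟩
      have hgval : g (w, w') = (Function.ne_iff.1 hfne).choose.length := dif_neg hfne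
      have hle : g (w, w') ≤ (Fs ×ˢ Fs).sup g :=
        Finset.le_sup (Finset.mem_product.2 ⟨hmemFs w hw, hmemFs w' hw'⟩)
      omega
    -- the disjoint cylinders
    set V : List S → Set (LTree S A) := fun w =>
      {z | ∀ u : List S, u.length ≤ D → z u = f w u} with hV
    have hVdisj : ∀ w : List S, w.length ≤ N+1 → ∀ w' : List S, w'.length ≤ N+1 →
        ∀ z : LTree S A, z ∈ V w → z ∈ V w' → w = w' := by
      intro w hw w' hw' z hz hz'
      by_contra hne
      obtain ⟨u, hu, hneq⟩ := hsep w hw w' hw' hne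
      exact hneq ((hz u hu).symm.trans (hz' u hu))
    -- the perturbed maps
    set τ : S → X → X := fun i x =>
      if h : ∃ w : List S, w.length ≤ N ∧ x.1 ∈ V w then
        ⟨f (h.choose ++ [i]), hfX _ (by
          have := h.choose_spec.1
          simp only [List.length_append, List.length_singleton]
          omega)⟩
      else ⟨shift i x.1, hX.2 i ⟨x.1, x.2, rfl⟩⟩ with hτ
    have hτval : ∀ (i : S) (y : X) (w : List S), w.length ≤ N → y.1 ∈ V w →
        (τ i y).1 = f (w ++ [i]) := by
      intro i y w hwN hy
      have hy' : ∃ w' : List S, w'.length ≤ N ∧ y.1 ∈ V w' := ⟨w, hwN, hy⟩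
      have h1 : (τ i y).1 = f (hy'.choose ++ [i]) := by
        simp only [hτ]; rw [dif_pos hy']
      rw [h1, hVdisj hy'.choose (hy'.choose_spec.1.trans (Nat.le_succ N)) w
        (hwN.trans (Nat.le_succ N)) y.1 hy'.choose_spec.2 hy]
    have hτval2 : ∀ (i : S) (y : X), (¬ ∃ w : List S, w.length ≤ N ∧ y.1 ∈ V w) →
        (τ i y).1 = shift i y.1 := by
      intro i y h
      simp only [hτ]; rw [dif_neg h]
    -- continuity of τ
    have hτcont : ∀ i, Continuous (τ i) := by
      intro i
      rw [continuous_iff_continuousAt]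
      intro x
      by_cases h : ∃ w : List S, w.length ≤ N ∧ x.1 ∈ V w
      · obtain ⟨w, hwN, hxV⟩ := h
        have hO : IsOpen {y : X | y.1 ∈ V w} :=
          (cyl_isOpen (f w) D).preimage continuous_subtype_val
        have hEqOn : Set.EqOn (τ i)
            (fun _ => (⟨f (w ++ [i]), hfX _ (by
              simp only [List.length_append, List.length_singleton]; omega)⟩ : X))
            {y : X | y.1 ∈ V w} :=
          fun y hy => Subtype.ext (hτval i y w hwN hy)
        exact ((continuousOn_const).congr hEqOn).continuousAt (hO.mem_nhds hxV)
      · have hCl : IsClosed (⋃ w ∈ {w : List S | w.length ≤ N}, V w) :=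
          (List.finite_length_le S N).isClosed_biUnion fun w _ => cyl_isClosed (f w) D
        have hO : IsOpen {y : X | ¬ ∃ w : List S, w.length ≤ N ∧ y.1 ∈ V w} := by
          have heq : {y : X | ¬ ∃ w : List S, w.length ≤ N ∧ y.1 ∈ V w} =
              Subtype.val ⁻¹' (⋃ w ∈ {w : List S | w.length ≤ N}, V w)ᶜ := by
            ext y; simp
          rw [heq]
          exact hCl.isOpen_compl.preimage continuous_subtype_val
        have hgc : Continuous (fun y : X => (⟨shift i y.1, hX.2 i ⟨y.1, y.2, rfl⟩⟩ : X)) := by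
          apply Continuous.subtype_mk
          exact continuous_pi fun v =>
            (continuous_apply (i :: v)).comp continuous_subtype_val
        have hEqOn : Set.EqOn (τ i)
            (fun y : X => (⟨shift i y.1, hX.2 i ⟨y.1, y.2, rfl⟩⟩ : X))
            {y : X | ¬ ∃ w : List S, w.length ≤ N ∧ y.1 ∈ V w} :=
          fun y hy => Subtype.ext (hτval2 i y hy)
        exact (hgc.continuousOn.congr hEqOn).continuousAt (hO.mem_nhds h)
    -- τ is δ-close to the shifts
    have hτδ : ∀ (i : S) (x : X), treeDist ((τ i x).1) (shift i x.1) < δ := by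
      intro i x
      by_cases h : ∃ w : List S, w.length ≤ N ∧ x.1 ∈ V w
      · obtain ⟨w, hwN, hxV⟩ := h
        rw [hτval i x w hwN hxV]
        have hag : ∀ v : List S, v.length ≤ n₀ → f (w ++ [i]) v = shift i x.1 v := by
          intro v hv
          have h1 : f (w ++ [i]) v = t ((w ++ [i]) ++ v) :=
            hfag (w ++ [i]) (by simp only [List.length_append, List.length_singleton]; omega)
              v (by omega)
          have h2 : x.1 (i :: v) = f w (i :: v) := hxV (i :: v) (by simp; omega)
          have h3 : f w (i :: v) = t (w ++ (i :: v)) :=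
            hfag w (by omega) (i :: v) (by simp; omega)
          have h4 : w ++ (i :: v) = (w ++ [i]) ++ v := by simp
          show f (w ++ [i]) v = x.1 (i :: v)
          rw [h1, h2, h3, h4]
        have h5 := treeDist_le_of_agree hag
        have h6 : (2:ℝ) ^ (-(n₀:ℤ) - 2) < (2:ℝ) ^ (-(n₀:ℤ) - 1) :=
          zpow_lt_zpow_right₀ one_lt_two (by linarith)
        calc treeDist _ _ ≤ (2:ℝ) ^ (-(n₀:ℤ) - 2) := h5
          _ < (2:ℝ) ^ (-(n₀:ℤ) - 1) := h6
          _ < δ := hn₀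
      · rw [hτval2 i x h, treeDist_self]
        exact hδpos
    -- apply topological stability
    obtain ⟨φ, hφcont, hφclose, hφeq⟩ := hstab τ hτcont hτδ
    set x₀ : X := ⟨f [], hfX [] (by simp)⟩ with hx₀
    -- the orbit of x₀ under τ is exactly the family f
    have CL : ∀ w : List S, w.length ≤ N + 1 → (recIter τ w x₀).1 = f w := by
      intro w
      induction w using List.reverseRecOn with
      | nil => intro _; rfl
      | append_singleton w i ih =>
        intro hw
        have hwN : w.length ≤ N := by
          simp only [List.length_append, List.length_singleton] at hw; omega
        rw [recIter_snoc]
        have h1 : (recIter τ w x₀).1 = f w := ih (by omega)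
        exact hτval i _ w hwN (by rw [h1]; exact fun u _ => rfl)
    -- semiconjugacy along words
    have EQ : ∀ (w : List S) (x : X) (v : List S),
        (φ x).1 (w ++ v) = (φ (recIter τ w x)).1 v := by
      intro w
      induction w with
      | nil => intro x v; rfl
      | cons i w' ih =>
        intro x v
        have h1 : (φ x).1 ((i :: w') ++ v) = (shift i (φ x).1) (w' ++ v) := rfl
        rw [h1, hφeq i x]
        exact ih (τ i x) v
    refine ⟨(φ x₀).1, (φ x₀).2, fun w hw => ?_⟩
    have h1 : (φ x₀).1 w = (φ (recIter τ w x₀)).1 [] := by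
      have := EQ w x₀ []
      simpa using this
    have h2 : (φ (recIter τ w x₀)).1 [] = (recIter τ w x₀).1 [] := by
      have hh := hφclose (recIter τ w x₀)
      have : treeDist (φ (recIter τ w x₀)).1 (recIter τ w x₀).1 < (2:ℝ) ^ (-((0:ℕ):ℤ) - 1) := by
        norm_num at hh ⊢
        exact hh
      exact agree_of_treeDist_lt this [] (by simp)
    have h3 : (recIter τ w x₀).1 [] = f w [] := by rw [CL w (hw.trans (Nat.le_succ N))]
    have h4 : f w [] = t (w ++ []) :=
      hfag w (hw.trans (Nat.le_succ N)) [] (by simp)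
    rw [h1, h2, h3, h4, List.append_nil]
  -- pass to the limit
  choose seq hseqX hseq using key
  have htend : Filter.Tendsto seq Filter.atTop (nhds t) := by
    rw [tendsto_pi_nhds]
    intro w
    apply Filter.Tendsto.congr' (f₁ := fun _ => t w)
    · exact (Filter.eventually_atTop.2 ⟨w.length, fun N hN => (hseq N w hN).symm⟩)
    · exact tendsto_const_nhds
  exact hX.1.mem_of_tendsto htend (Filter.Eventually.of_forall hseqX)
theorem stmt_16 {S A : Type*} [Fintype S] [Nonempty S] [Fintype A] [Nonempty A] [TopologicalSpace A] [DiscreteTopology A] (X : Set (LTree S A)) (hX : IsTreeShift X) (hperf : Preperfect X) :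
    TopStable X ↔ IsFiniteType X := by
  constructor
  · intro hTS
    obtain ⟨n, hA⟩ := stepA X hX hperf hTS
    exact stepB X hX n hA
  · intro hFT
    exact stepC X hFT
end
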